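/- arXiv:quant-ph/0302027 — 3 statements merged into one kernel-verified Lean document; each statement's English description precedes it below -/
import Mathlib

section
/- Let G=(V,E) be a finite simple graph and v a natural number. Then G contains an independent set V' with |V'| ≥ v if and only if there exists an assignment X : V → {0,1} with L(X) ≥ v. -/
open Finset

/-- The edge term `X_k * X_l` as a function on unordered pairs. -/
def edgeTerm {V : Type*} (X : V → ℤ) : Sym2 V → ℤ :=
  Sym2.lift ⟨fun k l => X k * X l, fun k l => by ring⟩

/-- `L(X) = ∑_{k∈V} X_k − ∑_{{k,l}∈E} X_k X_l`. -/
def LFun {V : Type*} [Fintype V] [DecidableEq V] (G : SimpleGraph V)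
    [DecidableRel G.Adj] (X : V → ℤ) : ℤ :=
  (∑ k, X k) - ∑ e ∈ G.edgeFinset, edgeTerm X e

instance instDecMemAll {V : Type*} [DecidableEq V] (S : Finset V) (e : Sym2 V) :
    Decidable (∀ x ∈ e, x ∈ S) :=
  e.recOnSubsingleton fun p1 p2 => decidable_of_iff (p1 ∈ S ∧ p2 ∈ S) (by
    constructor
    · rintro ⟨h1, h2⟩ x hx
      rw [Sym2.mem_iff] at hx; rcases hx with rfl | rfl <;> assumption
    · intro h; exact ⟨h _ (Sym2.mem_mk_left _ _), h _ (Sym2.mem_mk_right _ _)⟩)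

lemma exists_indep {V : Type*} [Fintype V] [DecidableEq V] (G : SimpleGraph V)
    [DecidableRel G.Adj] :
    ∀ (n : ℕ) (S : Finset V),
      (G.edgeFinset.filter (fun e => ∀ x ∈ e, x ∈ S)).card ≤ n →
      ∃ T ⊆ S, (∀ k ∈ T, ∀ l ∈ T, ¬ G.Adj k l) ∧
        (S.card : ℤ) - (G.edgeFinset.filter (fun e => ∀ x ∈ e, x ∈ S)).card ≤ T.card := by
  intro n
  induction n with
  | zero =>
    intro S h
    refine ⟨S, Finset.Subset.refl _, ?_, ?_⟩
    · intro k hk l hl hadj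
      have : s(k, l) ∈ G.edgeFinset.filter (fun e => ∀ x ∈ e, x ∈ S) := by
        refine Finset.mem_filter.mpr ⟨?_, ?_⟩
        · exact SimpleGraph.mem_edgeFinset.mpr hadj
        · intro x hx; rw [Sym2.mem_iff] at hx; rcases hx with rfl | rfl <;> assumption
      have := Finset.card_pos.mpr ⟨_, this⟩
      omega
    · have : (G.edgeFinset.filter (fun e => ∀ x ∈ e, x ∈ S)).card = 0 := by omega
      simp [this]
  | succ n ih =>
    intro S h
    by_cases hE : (G.edgeFinset.filter (fun e => ∀ x ∈ e, x ∈ S)) = ∅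
    · refine ⟨S, Finset.Subset.refl _, ?_, by simp [hE]⟩
      intro k hk l hl hadj
      have : s(k, l) ∈ G.edgeFinset.filter (fun e => ∀ x ∈ e, x ∈ S) := by
        refine Finset.mem_filter.mpr ⟨SimpleGraph.mem_edgeFinset.mpr hadj, ?_⟩
        intro x hx; rw [Sym2.mem_iff] at hx; rcases hx with rfl | rfl <;> assumption
      simp [hE] at this
    · obtain ⟨e, he⟩ := Finset.nonempty_iff_ne_empty.mpr hE
      obtain ⟨heE, heS⟩ := Finset.mem_filter.mp he
      induction e using Sym2.ind with
      | _ a b =>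
        have hab : G.Adj a b := SimpleGraph.mem_edgeFinset.mp heE
        have haS : a ∈ S := heS a (Sym2.mem_mk_left _ _)
        have hbS : b ∈ S := heS b (Sym2.mem_mk_right _ _)
        set S' := S.erase a with hS'
        have hsub : (G.edgeFinset.filter (fun e => ∀ x ∈ e, x ∈ S')) ⊆
            (G.edgeFinset.filter (fun e => ∀ x ∈ e, x ∈ S)).erase s(a, b) := by
          intro f hf
          obtain ⟨hfE, hfS'⟩ := Finset.mem_filter.mp hf
          refine Finset.mem_erase.mpr ⟨?_, Finset.mem_filter.mpr ⟨hfE, fun x hx => Finset.mem_of_mem_erase (hfS' x hx)⟩⟩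
          intro hfe
          have := hfS' a (by rw [hfe]; exact Sym2.mem_mk_left _ _)
          exact (Finset.ne_of_mem_erase this) rfl
        have hcard : (G.edgeFinset.filter (fun e => ∀ x ∈ e, x ∈ S')).card ≤ n := by
          have h1 := Finset.card_le_card hsub
          have h2 := Finset.card_erase_of_mem he
          omega
        obtain ⟨T, hTsub, hTind, hTcard⟩ := ih S' hcard
        refine ⟨T, hTsub.trans (Finset.erase_subset _ _), hTind, ?_⟩
        have hS'card : S'.card = S.card - 1 := Finset.card_erase_of_mem haS
        have hSpos : 1 ≤ S.card := Finset.card_pos.mpr ⟨a, haS⟩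
        have h2 : (G.edgeFinset.filter (fun e => ∀ x ∈ e, x ∈ S')).card + 1 ≤
            (G.edgeFinset.filter (fun e => ∀ x ∈ e, x ∈ S)).card := by
          have h1 := Finset.card_le_card hsub
          have hfull := Finset.card_erase_of_mem he
          have hfpos : 0 < (G.edgeFinset.filter (fun e => ∀ x ∈ e, x ∈ S)).card :=
            Finset.card_pos.mpr ⟨_, he⟩
          omega
        have hcast : (S'.card : ℤ) = (S.card : ℤ) - 1 := by
          rw [hS'card]; push_cast [hSpos]; ring
        have h2' : ((G.edgeFinset.filter (fun e => ∀ x ∈ e, x ∈ S')).card : ℤ) + 1 ≤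
            ((G.edgeFinset.filter (fun e => ∀ x ∈ e, x ∈ S)).card : ℤ) := by exact_mod_cast h2
        linarith

/-- `G` contains an independent set of cardinality at least `v` iff some 0/1
assignment `X` satisfies `L(X) ≥ v`. -/
theorem indepSet_iff_L_ge {V : Type*} [Fintype V] [DecidableEq V]
    (G : SimpleGraph V) [DecidableRel G.Adj] (v : ℕ) :
    (∃ V' : Finset V, (∀ k ∈ V', ∀ l ∈ V', ¬ G.Adj k l) ∧ v ≤ V'.card) ↔
      (∃ X : V → ℤ, (∀ k, X k = 0 ∨ X k = 1) ∧ (v : ℤ) ≤ LFun G X) := by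
  constructor
  · rintro ⟨V', hind, hcard⟩
    refine ⟨fun k => if k ∈ V' then 1 else 0, fun k => by by_cases h : k ∈ V' <;> simp [h], ?_⟩
    have hsum : (∑ k, (if k ∈ V' then (1 : ℤ) else 0)) = V'.card := by
      simp [Finset.sum_ite_mem]
    have hedge : ∀ e ∈ G.edgeFinset, edgeTerm (fun k => if k ∈ V' then (1:ℤ) else 0) e = 0 := by
      intro e he
      induction e using Sym2.ind with
      | _ a b =>
        have hab : G.Adj a b := SimpleGraph.mem_edgeFinset.mp he
        have : ¬ (a ∈ V' ∧ b ∈ V') := fun ⟨ha, hb⟩ => hind a ha b hb hab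
        by_cases ha : a ∈ V' <;> by_cases hb : b ∈ V' <;> simp [edgeTerm, ha, hb] at this ⊢ <;> tauto
    rw [LFun, Finset.sum_eq_zero hedge, hsum]
    push_cast; omega
  · rintro ⟨X, hX01, hL⟩
    set S := Finset.univ.filter (fun k => X k = 1) with hS
    have hsum : (∑ k, X k) = S.card := by
      rw [Finset.card_filter]
      push_cast
      apply Finset.sum_congr rfl
      intro k _
      rcases hX01 k with h | h <;> simp [h]
    have hedge : ∀ e ∈ G.edgeFinset, edgeTerm X e = if (∀ x ∈ e, x ∈ S) then 1 else 0 := by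
      intro e _
      induction e using Sym2.ind with
      | _ a b =>
        have ha := hX01 a; have hb := hX01 b
        have hmem : (∀ x ∈ (s(a,b) : Sym2 V), x ∈ S) ↔ (X a = 1 ∧ X b = 1) := by
          constructor
          · intro h
            have h1 := h a (Sym2.mem_mk_left _ _)
            have h2 := h b (Sym2.mem_mk_right _ _)
            simp [hS] at h1 h2; exact ⟨h1, h2⟩
          · rintro ⟨h1, h2⟩ x hx
            rw [Sym2.mem_iff] at hx
            rcases hx with rfl | rfl <;> simp [hS, h1, h2]
        rw [edgeTerm]
        by_cases h : X a = 1 ∧ X b = 1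
        · rw [if_pos (hmem.mpr h)]
          simp [edgeTerm, h.1, h.2]
        · rw [if_neg (fun hh => h (hmem.mp hh))]
          simp only [Sym2.lift_mk]
          rcases ha with ha | ha <;> rcases hb with hb | hb <;> simp [ha, hb] at h ⊢
    have hsum2 : (∑ e ∈ G.edgeFinset, edgeTerm X e) =
        ((G.edgeFinset.filter (fun e => ∀ x ∈ e, x ∈ S)).card : ℤ) := by
      rw [Finset.sum_congr rfl hedge, ← Finset.sum_filter]
      simp
    rw [LFun, hsum, hsum2] at hL
    obtain ⟨T, hTsub, hTind, hTcard⟩ := exists_indep G _ S le_rfl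
    exact ⟨T, hTind, by push_cast at hL hTcard ⊢; omega⟩
end

section
/- Let G=(V,E) be a finite simple graph. Then the maximum of L(X) over all assignments X : V → {0,1} equals the maximum cardinality of an independent set of G. -/
open Finset

/-!
A 0/1 assignment `X` is the indicator of the set `S` where it equals `1`, and then `L(X)` is
`|S|` minus the number of edges of `G` inside `S`. For an independent set this is `|S|`; in
general, deleting one endpoint of each edge inside `S` leaves an independent set of size at
least `L(X)`.
-/

namespace SimpleGraph

variable {V : Type*} {G : SimpleGraph V}

theorem isIndepSet_coe_iff {s : Finset V} :
    G.IsIndepSet (s : Set V) ↔ ∀ k ∈ s, ∀ l ∈ s, ¬ G.Adj k l :=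
  ⟨fun h _ hk _ hl hadj => h hk hl hadj.ne hadj, fun h k hk l hl _ => h k hk l hl⟩

theorem isGreatest_indepNum [Finite V] :
    IsGreatest {n : ℕ | ∃ s : Finset V, (∀ k ∈ s, ∀ l ∈ s, ¬ G.Adj k l) ∧ s.card = n}
      G.indepNum := by
  refine ⟨?_, ?_⟩
  · obtain ⟨s, hs⟩ := G.exists_isNIndepSet_indepNum
    exact ⟨s, isIndepSet_coe_iff.mp hs.isIndepSet, hs.card_eq⟩
  · rintro n ⟨s, hs, rfl⟩
    exact (isIndepSet_coe_iff.mpr hs).card_le_indepNum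

theorem exists_isIndepSet_card_add_card_edges_ge [Fintype V] [DecidableEq V]
    [DecidableRel G.Adj] (s : Finset V) :
    ∃ t : Finset V, G.IsIndepSet (t : Set V) ∧
      s.card ≤ t.card + (G.edgeFinset.filter (· ∈ s.sym2)).card := by
  set cover := (G.edgeFinset.filter (· ∈ s.sym2)).image fun e => e.out.1
  refine ⟨s \ cover, isIndepSet_coe_iff.mpr ?_, ?_⟩
  · intro k hk l hl hadj
    simp only [mem_sdiff] at hk hl
    have hmem : s(k, l).out.1 ∈ cover :=
      mem_image_of_mem _ <|
        mem_filter.mpr ⟨mem_edgeFinset.mpr hadj, mk_mem_sym2_iff.mpr ⟨hk.1, hl.1⟩⟩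
    rcases Sym2.mem_iff.mp (Sym2.out_fst_mem s(k, l)) with h | h <;> rw [h] at hmem
    exacts [hk.2 hmem, hl.2 hmem]
  · calc s.card ≤ (s \ cover).card + cover.card := card_le_card_sdiff_add_card
      _ ≤ _ := Nat.add_le_add_left card_image_le _

theorem IsIndepSet.filter_mem_sym2_edgeFinset_eq_empty [DecidableEq V] [Fintype G.edgeSet]
    {s : Finset V} (hs : G.IsIndepSet (s : Set V)) : G.edgeFinset.filter (· ∈ s.sym2) = ∅ := by
  refine filter_eq_empty_iff.mpr fun e he hes => ?_
  induction e using Sym2.ind with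
  | _ a b =>
    rw [mk_mem_sym2_iff] at hes
    exact isIndepSet_coe_iff.mp hs a hes.1 b hes.2 (mem_edgeFinset.mp he)

end SimpleGraph

open SimpleGraph

section LFun

variable {V : Type*} [DecidableEq V]

theorem eq_ite_mem_of_forall_eq_zero_or_one [Fintype V] {X : V → ℤ}
    (h : ∀ k, X k = 0 ∨ X k = 1) :
    X = fun k => if k ∈ univ.filter (X · = 1) then 1 else 0 := by
  ext k
  rcases h k with hk | hk <;> simp [hk]

theorem edgeTerm_ite_mem (s : Finset V) (e : Sym2 V) :
    edgeTerm (fun k => if k ∈ s then 1 else 0) e = if e ∈ s.sym2 then 1 else 0 := by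
  induction e using Sym2.ind with
  | _ a b => by_cases ha : a ∈ s <;> by_cases hb : b ∈ s <;> simp [edgeTerm, ha, hb]

theorem LFun_ite_mem [Fintype V] (G : SimpleGraph V) [DecidableRel G.Adj] (s : Finset V) :
    LFun G (fun k => if k ∈ s then 1 else 0) =
      s.card - (G.edgeFinset.filter (· ∈ s.sym2)).card := by
  simp [LFun, edgeTerm_ite_mem]

end LFun

/-- The maximum of `L(X)` over all 0/1 assignments `X` equals the maximum
cardinality of an independent set of `G`. -/
theorem max_L_eq_max_indepSet_card {V : Type*} [Fintype V] [DecidableEq V]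
    (G : SimpleGraph V) [DecidableRel G.Adj] :
    ∃ m : ℕ,
      IsGreatest {n : ℕ | ∃ V' : Finset V,
        (∀ k ∈ V', ∀ l ∈ V', ¬ G.Adj k l) ∧ V'.card = n} m ∧
      IsGreatest {z : ℤ | ∃ X : V → ℤ,
        (∀ k, X k = 0 ∨ X k = 1) ∧ LFun G X = z} (m : ℤ) := by
  refine ⟨G.indepNum, isGreatest_indepNum, ?_, ?_⟩
  · obtain ⟨s, hs⟩ := G.exists_isNIndepSet_indepNum
    refine ⟨fun k => if k ∈ s then 1 else 0, fun k => by by_cases hk : k ∈ s <;> simp [hk], ?_⟩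
    rw [LFun_ite_mem, IsIndepSet.filter_mem_sym2_edgeFinset_eq_empty hs.isIndepSet, hs.card_eq]
    simp
  · rintro z ⟨X, h01, rfl⟩
    obtain ⟨t, ht, hcard⟩ :=
      exists_isIndepSet_card_add_card_edges_ge (G := G) (univ.filter (X · = 1))
    rw [eq_ite_mem_of_forall_eq_zero_or_one h01, LFun_ite_mem]
    have ht_le := ht.card_le_indepNum
    omega
end

section
/- Let v, v' ∈ {−1,1}^4 and for s = 1,…,4 let u_s = I if v_s = 1 and u_s = σ_x if v_s = −1, and likewise u'_s from v'_s. Then (1/4) ∑_{s=1}^{4} (u_s ⊗ u'_s)(σ_z ⊗ σ_z)(u_s ⊗ u'_s)† = (⟨v,v'⟩/4) (σ_z ⊗ σ_z), where ⟨v,v'⟩ = ∑_{s=1}^{4} v_s v'_s. That is, applying the pulse sequences v and v' at two adjacent lattice points changes the average coupling σ_z ⊗ σ_z to (⟨v,v'⟩/4) σ_z ⊗ σ_z. -/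
open Matrix Kronecker Finset

/-- The Pauli matrix `σ_x`. -/
def σx : Matrix (Fin 2) (Fin 2) ℂ := !![0, 1; 1, 0]

/-- The Pauli matrix `σ_z`. -/
def σz : Matrix (Fin 2) (Fin 2) ℂ := !![1, 0; 0, -1]

/-! Conjugating `σ_z` by the pulse `I` (for `a = 1`) or `σ_x` (for `a = -1`) multiplies it by
`a`; conjugation by a Kronecker product acts factorwise, so each term of the average is
`v_s v'_s • σ_z ⊗ σ_z`. -/

theorem Matrix.kronecker_mul_mul_conjTranspose {l m n p R : Type*} [Fintype m] [Fintype p]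
    [CommSemiring R] [StarRing R] (A : Matrix l m R) (B : Matrix n p R) (C : Matrix m m R)
    (D : Matrix p p R) :
    (A ⊗ₖ B) * (C ⊗ₖ D) * (A ⊗ₖ B)ᴴ = (A * C * Aᴴ) ⊗ₖ (B * D * Bᴴ) := by
  rw [conjTranspose_kronecker, mul_kronecker_mul, mul_kronecker_mul]

theorem σx_conjTranspose : σxᴴ = σx := by
  ext i j
  fin_cases i <;> fin_cases j <;> simp [σx]

theorem σx_mul_σz_mul_σx : σx * σz * σx = -σz := by
  ext i j
  fin_cases i <;> fin_cases j <;> simp [σx, σz, mul_apply, Fin.sum_univ_two]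

theorem pulse_mul_σz_mul_conjTranspose {a : ℝ} (ha : a = -1 ∨ a = 1) :
    (if a = 1 then 1 else σx) * σz * (if a = 1 then 1 else σx)ᴴ = (a : ℂ) • σz := by
  rcases ha with rfl | rfl
  · rw [if_neg (by norm_num), σx_conjTranspose, σx_mul_σz_mul_σx]
    simp
  · simp

/-- Applying the pulse sequences `v` and `v'` (entries in `{−1,1}`, where `−1`
means conjugation by `σ_x` and `1` means doing nothing) at two adjacent
lattice points changes the average coupling `σ_z ⊗ σ_z` into
`(⟨v,v'⟩/4) σ_z ⊗ σ_z`. -/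
theorem average_coupling_eq_inner_smul (v v' : Fin 4 → ℝ)
    (hv : ∀ s, v s = -1 ∨ v s = 1) (hv' : ∀ s, v' s = -1 ∨ v' s = 1)
    (u u' : Fin 4 → Matrix (Fin 2) (Fin 2) ℂ)
    (hu : ∀ s, u s = if v s = 1 then 1 else σx)
    (hu' : ∀ s, u' s = if v' s = 1 then 1 else σx) :
    (1 / 4 : ℂ) • ∑ s : Fin 4,
        (u s ⊗ₖ u' s) * (σz ⊗ₖ σz) * (u s ⊗ₖ u' s)ᴴ =
      (((∑ s : Fin 4, v s * v' s) / 4 : ℝ) : ℂ) • (σz ⊗ₖ σz) := by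
  have hterm : ∀ s, (u s ⊗ₖ u' s) * (σz ⊗ₖ σz) * (u s ⊗ₖ u' s)ᴴ =
      ((v s * v' s : ℝ) : ℂ) • (σz ⊗ₖ σz) := by
    intro s
    rw [kronecker_mul_mul_conjTranspose, hu, hu', pulse_mul_σz_mul_conjTranspose (hv s),
      pulse_mul_σz_mul_conjTranspose (hv' s), smul_kronecker, kronecker_smul, smul_smul,
      Complex.ofReal_mul]
  simp only [hterm, ← sum_smul, smul_smul]
  congr 1
  push_cast
  ring
end
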